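/- For any finitely generated subgroup Γ ⊂ ℚ* and any integer m ≥ 1, the set tildeΓ(m) is a subgroup of the 2-torsion group Γ(m₂)[2]; in particular its order |tildeΓ(m)| is a power of 2. -/

import Mathlib

/- Common definitions: finitely generated multiplicative subgroups `Γ ⊆ ℚˣ`,
the quotients `Γ(n) = Γ·(ℚ*)ⁿ/(ℚ*)ⁿ`, the invariants `δ(γ)`, the group `tildeΓ(m)`,
the constants `A(Γ,m)` and `B_{Γ,k}`, and the density `ρ(Γ,m)`. -/

open scoped Classical

noncomputable section

/-- The subgroup `(ℚˣ)ⁿ` of `n`-th powers in `ℚˣ`. -/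
def powSubgroup (n : ℕ) : Subgroup ℚˣ := (powMonoidHom n : ℚˣ →* ℚˣ).range

/-- `Γ(n)`: the image of `Γ` in `ℚˣ/(ℚˣ)ⁿ`. -/
def GammaMod (Γ : Subgroup ℚˣ) (n : ℕ) : Subgroup (ℚˣ ⧸ powSubgroup n) :=
  Γ.map (QuotientGroup.mk' (powSubgroup n))

/-- The unit of `ℚˣ` determined by a nonzero integer (junk value `1` at `0`). -/
def intUnit (b : ℤ) : ℚˣ := if h : (b : ℚ) = 0 then 1 else Units.mk0 (b : ℚ) h

/-- The unit of `ℚˣ` determined by a nonzero natural number. -/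
def natUnit (b : ℕ) : ℚˣ := intUnit b

/-- A class modulo `n`-th powers contains a positive rational (for even `n` this says
that the class consists of positive rationals). -/
def IsPosClass (n : ℕ) (c : ℚˣ ⧸ powSubgroup n) : Prop :=
  ∃ x : ℚˣ, QuotientGroup.mk x = c ∧ 0 < (x : ℚ)

/-- `δ(γ)` for a class `γ` modulo `(ℚˣ)ⁿ` (`n = 2^α`): if `γ = ±γ₀^(n/2)·(ℚˣ)ⁿ` with
`γ₀ > 1` squarefree, this is the discriminant of `ℚ(√γ₀)`, namely `γ₀` if `γ₀ ≡ 1 mod 4`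
and `4γ₀` otherwise; the trivial class gets the value `1`. -/
def deltaClass (n : ℕ) (c : ℚˣ ⧸ powSubgroup n) : ℕ :=
  if c = 1 then 1
  else if h : ∃ g : ℕ, Squarefree g ∧ 1 < g ∧
      ((QuotientGroup.mk (natUnit g ^ (n / 2)) : ℚˣ ⧸ powSubgroup n) = c ∨
       (QuotientGroup.mk (-(natUnit g ^ (n / 2))) : ℚˣ ⧸ powSubgroup n) = c)
  then (if h.choose % 4 = 1 then h.choose else 4 * h.choose)
  else 1

/-- The set `tildeΓ(m) ⊆ Γ(m₂)[2]`, where `m₂ = 2^(v₂(m))`. -/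
def tildeGamma (Γ : Subgroup ℚˣ) (m : ℕ) :
    Set (ℚˣ ⧸ powSubgroup (2 ^ padicValNat 2 m)) :=
  {c | c ∈ GammaMod Γ (2 ^ padicValNat 2 m) ∧ c ^ 2 = 1 ∧
    (if IsPosClass (2 ^ padicValNat 2 m) c
     then padicValNat 2 (deltaClass (2 ^ padicValNat 2 m) c) ≤ padicValNat 2 m
     else padicValNat 2 (deltaClass (2 ^ padicValNat 2 m) c) = padicValNat 2 m + 1)}

/-- `B_{Γ,k}`. -/
def BGamma (Γ : Subgroup ℚˣ) (k : ℕ) : ℝ :=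
  ∑ᶠ c ∈ tildeGamma Γ k,
    ∏ᶠ ℓ ∈ {ℓ : ℕ | ℓ.Prime ∧ ℓ ∣ deltaClass (2 ^ padicValNat 2 k) c ∧ ¬ ℓ ∣ k},
      (-1 : ℝ) / (((ℓ : ℝ) - 1) * (Nat.card (GammaMod Γ ℓ)) - 1)

/-- `A(Γ,m)`. -/
def AGamma (Γ : Subgroup ℚˣ) (m : ℕ) : ℝ :=
  (1 / ((Nat.totient m : ℝ) * (Nat.card (GammaMod Γ m) : ℝ))) *
  (∏ᶠ ℓ ∈ {ℓ : ℕ | ℓ.Prime ∧ ℓ ≠ 2 ∧ ℓ ∣ m},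
      (1 - (Nat.card (GammaMod Γ (ℓ ^ padicValNat ℓ m)) : ℝ) /
        ((ℓ : ℝ) * (Nat.card (GammaMod Γ (ℓ ^ (padicValNat ℓ m + 1))) : ℝ)))) *
  (∏' ℓ : {ℓ : ℕ // ℓ.Prime ∧ ℓ ≠ 2 ∧ ¬ ℓ ∣ m},
      (1 - 1 / ((((ℓ : ℕ) : ℝ) - 1) * (Nat.card (GammaMod Γ ((ℓ : ℕ))) : ℝ))))

/-- The set `{ζ_d} ∪ Γ^{1/d}` inside `ℂ`, where `Γ^{1/d}` is the set of real `d`-th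
roots of elements of `Γ`. -/
def kummerSet (Γ : Subgroup ℚˣ) (d : ℕ) : Set ℂ :=
  {Complex.exp (2 * Real.pi * Complex.I / d)} ∪
  {z : ℂ | ∃ x : ℝ, (x : ℂ) = z ∧ ∃ γ ∈ Γ, x ^ d = ((γ : ℚ) : ℝ)}

/-- The degree `[ℚ(ζ_d, Γ^{1/d}) : ℚ]`. -/
def kummerDegree (Γ : Subgroup ℚˣ) (d : ℕ) : ℕ :=
  Module.finrank ℚ (IntermediateField.adjoin ℚ (kummerSet Γ d))

/-- `ρ(Γ,m) = ∑_{k ≥ 1} μ(k)/[ℚ(ζ_{mk},Γ^{1/mk}):ℚ]`. -/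
def rhoGamma (Γ : Subgroup ℚˣ) (m : ℕ) : ℝ :=
  ∑' k : ℕ, if k = 0 then 0 else
    (ArithmeticFunction.moebius k : ℝ) / (kummerDegree Γ (m * k) : ℝ)

/-- `Γ` has rank `r ≥ 1`: it contains an element of infinite order. -/
def HasPositiveRank (Γ : Subgroup ℚˣ) : Prop :=
  ∃ g ∈ Γ, ∀ n : ℕ, 0 < n → g ^ n ≠ 1

/-- The discriminant of the quadratic field `ℚ(√g)`: writing `g = d·t²` with `d` a
squarefree integer, it is `d` if `d ≡ 1 mod 4` and `4d` otherwise (in particular it is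
`1` if `g` is a square of a rational; junk value `0` at `g = 0`). -/
def quadDisc (g : ℚ) : ℤ :=
  if h : ∃ d : ℤ, Squarefree d ∧ ∃ t : ℚ, g = (d : ℚ) * t ^ 2
  then (if h.choose % 4 = 1 then h.choose else 4 * h.choose)
  else 0

/-- The support of `Γ`: primes occurring with nonzero valuation in some element of `Γ`. -/
def suppGamma (Γ : Subgroup ℚˣ) : Set ℕ :=
  {ℓ : ℕ | ℓ.Prime ∧ ∃ γ ∈ Γ, padicValRat ℓ (γ : ℚ) ≠ 0}

/-- The reduction `Γ_p` of `Γ` modulo a prime `p` (not in the support of `Γ`),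
as a subgroup of `(ZMod p)ˣ = 𝔽_pˣ`. -/
def reductionGamma (Γ : Subgroup ℚˣ) (p : ℕ) : Subgroup (ZMod p)ˣ :=
  Subgroup.closure
    {x : (ZMod p)ˣ | ∃ γ ∈ Γ,
      (x : ZMod p) = ((γ : ℚ).num : ZMod p) * (((γ : ℚ).den : ZMod p))⁻¹}

/-- The `m`-th cyclotomic field `K_m = ℚ(ζ_m)` inside `ℂ`. -/
def cycloField (m : ℕ) : IntermediateField ℚ ℂ :=
  IntermediateField.adjoin ℚ {Complex.exp (2 * Real.pi * Complex.I / m)}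

/-- `tildeΓ_{m,d} = (Γ·(ℚ*)^d ∩ (K_m^*)^d)/(ℚ*)^d`, as a subset of `ℚˣ/(ℚˣ)^d`. -/
def tildeGammaMD (Γ : Subgroup ℚˣ) (m d : ℕ) : Set (ℚˣ ⧸ powSubgroup d) :=
  {c | ∃ x : ℚˣ, QuotientGroup.mk x = c ∧ (∃ γ ∈ Γ, ∃ y : ℚˣ, x = γ * y ^ d) ∧
    ∃ z ∈ cycloField m, z ^ d = ((x : ℚ) : ℂ)}

/-- The Artin constant `A = ∏_ℓ (1 - 1/(ℓ² - ℓ))`. -/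
def artinConst : ℝ :=
  ∏' ℓ : {ℓ : ℕ // ℓ.Prime}, (1 - 1 / (((ℓ : ℕ) : ℝ) ^ 2 - ((ℓ : ℕ) : ℝ)))

/-- The subgroup `⟨-1, a⟩` of `ℚˣ` generated by `-1` and a rational `a`. -/
def negOneAGroup (a : ℚ) : Subgroup ℚˣ :=
  Subgroup.closure {u : ℚˣ | (u : ℚ) = -1 ∨ (u : ℚ) = a}

/-- `τ_{a,m}` (depending only on `h`, `m` and `a₁`). -/
def tau (h m a₁ : ℕ) : ℝ :=
  if padicValNat 2 m < padicValNat 2 h then 0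
  else if padicValNat 2 h = padicValNat 2 m ∧ padicValNat 2 m = 0 ∧ 2 ∣ h * a₁ then 0
  else if (padicValNat 2 h = 0 ∧ padicValNat 2 m = 0 ∧ ¬ 2 ∣ h * a₁) ∨
      (padicValNat 2 h = padicValNat 2 m ∧ 0 < padicValNat 2 m) ∨
      (padicValNat 2 h < padicValNat 2 m ∧ padicValNat 2 m = 1 ∧ 2 ∣ h * a₁) then -1/3
  else 1

end

/-!
For `α ≥ 1`, every class of order dividing `2` in `ℚˣ/(ℚˣ)^(2^α)` is `±g^(2^(α-1))` for a unique
sign and a unique squarefree `g ≥ 1`, and `δ` of that class is the discriminant of `ℚ(√g)`, whose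
`2`-adic valuation is `0`, `2` or `3` according as `g ≡ 1`, `g ≡ 3 (mod 4)` or `g` is even.
The product of the classes of `±g₁` and `±g₂` is the class of `±g₃`, with the product sign and
`g₁g₂ = t²g₃`; so `g₃` is odd iff `g₁, g₂` have the same parity, and `g₃ ≡ g₁g₂ (mod 4)` when both
are odd. For `α = 1`, `2` and `≥ 3` the condition defining `tildeΓ(m)` reads `±g ≡ 1 (mod 4)`,
"the sign is `+` iff `g` is odd", and "the sign is `+`", each stable under products. For `α = 0`
the quotient is trivial. Finally `tildeΓ(m)` lies in the finite group `Γ(m₂)` and has exponent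
`2`, so its order is a power of `2`.
-/

open QuotientGroup

section PowerClasses

variable {n : ℕ}

theorem quotient_powSubgroup_pow_eq_one (c : ℚˣ ⧸ powSubgroup n) : c ^ n = 1 := by
  induction c using QuotientGroup.induction_on with
  | H x => rw [← QuotientGroup.mk_pow, QuotientGroup.eq_one_iff]; exact ⟨x, rfl⟩

theorem subsingleton_quotient_powSubgroup_one : Subsingleton (ℚˣ ⧸ powSubgroup 1) := by
  rw [show powSubgroup 1 = ⊤ from eq_top_iff.mpr fun x _ => ⟨x, pow_one x⟩]
  exact QuotientGroup.subsingleton_quotient_top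

theorem GammaMod.finite {Γ : Subgroup ℚˣ} (hΓ : Γ.FG) (hn : n ≠ 0) : Finite (GammaMod Γ n) := by
  obtain ⟨S, hS⟩ := hΓ
  have : Group.FG (GammaMod Γ n) := (Group.fg_iff_subgroup_fg _).mpr
    ⟨S.image (mk' (powSubgroup n)), by rw [Finset.coe_image, ← MonoidHom.map_closure, hS]; rfl⟩
  exact CommGroup.finite_of_fg_isMulTorsion _ fun c => isOfFinOrder_iff_pow_eq_one.mpr
    ⟨n, Nat.pos_of_ne_zero hn, Subtype.ext (quotient_powSubgroup_pow_eq_one _)⟩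

theorem mk_eq_mk_of_val_eq_mul_pow {x z : ℚˣ} {t : ℚ} (ht : t ≠ 0) (h : (x : ℚ) = z * t ^ n) :
    (mk x : ℚˣ ⧸ powSubgroup n) = mk z := by
  refine QuotientGroup.eq.mpr ⟨(Units.mk0 t ht)⁻¹, Units.ext ?_⟩
  simp only [powMonoidHom_apply, Units.val_pow_eq_pow_val, Units.val_inv_eq_inv_val, Units.val_mul,
    Units.val_mk0, h]
  rw [mul_inv_rev, mul_assoc, inv_mul_cancel₀ z.ne_zero, mul_one, inv_pow]

theorem pos_of_mem_powSubgroup (hn : Even n) {x : ℚˣ} (hx : x ∈ powSubgroup n) : 0 < (x : ℚ) := by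
  obtain ⟨y, rfl⟩ := hx
  simpa using hn.pow_pos y.ne_zero

theorem isPosClass_mk_iff (hn : Even n) (x : ℚˣ) : IsPosClass n (mk x) ↔ 0 < (x : ℚ) := by
  refine ⟨fun ⟨z, hzx, hz⟩ => ?_, fun hx => ⟨x, rfl, hx⟩⟩
  have hq := pos_of_mem_powSubgroup hn (QuotientGroup.eq.mp hzx)
  rw [Units.val_mul, Units.val_inv_eq_inv_val] at hq
  have hx : (x : ℚ) = z * ((z : ℚ)⁻¹ * x) := by field_simp
  exact hx ▸ mul_pos hz hq

end PowerClasses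

theorem val_natUnit {g : ℕ} (hg : g ≠ 0) : (natUnit g : ℚ) = g := by
  simp [natUnit, intUnit, hg]

theorem natUnit_one : natUnit 1 = 1 := Units.ext (val_natUnit one_ne_zero)

theorem Rat.exists_abs_eq_squarefree_mul_sq {q : ℚ} (hq : q ≠ 0) :
    ∃ (g : ℕ) (t : ℚ), Squarefree g ∧ t ≠ 0 ∧ |q| = g * t ^ 2 := by
  have hden : (q.den : ℚ) ≠ 0 := by positivity
  obtain ⟨g, b, -, hb, hgb, hg⟩ :=
    Nat.sq_mul_squarefree_of_pos (n := q.num.natAbs * q.den) (by positivity)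
  refine ⟨g, b / q.den, hg, by positivity, ?_⟩
  have hcast : (b : ℚ) ^ 2 * g = |(q.num : ℚ)| * q.den := by
    rw [← Int.cast_abs, ← Nat.cast_natAbs]; exact_mod_cast hgb
  rw [← Rat.num_div_den q, abs_div, Nat.abs_cast, Rat.num_div_den q]
  field_simp
  linear_combination -hcast

theorem Squarefree.eq_of_mul_sq_eq {g₁ g₂ a b : ℕ} (h₁ : Squarefree g₁) (h₂ : Squarefree g₂)
    (hab : a.Coprime b) (h : g₂ * b ^ 2 = g₁ * a ^ 2) : g₁ = g₂ := by
  have hb : b = 1 := Nat.isUnit_iff.mp <| h₁ b <| by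
    rw [← sq]; exact (hab.symm.pow 2 2).dvd_of_dvd_mul_right (h ▸ dvd_mul_left _ _)
  have ha : a = 1 := Nat.isUnit_iff.mp <| h₂ a <| by
    rw [← sq]; exact (hab.pow 2 2).dvd_of_dvd_mul_right (h.symm ▸ dvd_mul_left _ _)
  simpa [ha, hb] using h.symm

theorem Squarefree.eq_of_cast_eq_mul_sq {g₁ g₂ : ℕ} (h₁ : Squarefree g₁) (h₂ : Squarefree g₂)
    {y : ℚ} (h : (g₂ : ℚ) = g₁ * y ^ 2) : g₁ = g₂ := by
  refine h₁.eq_of_mul_sq_eq h₂ y.reduced (a := y.num.natAbs) (b := y.den) ?_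
  have key : (g₂ : ℚ) * y.den ^ 2 = g₁ * (y.num.natAbs : ℚ) ^ 2 := by
    rw [Nat.cast_natAbs, Int.cast_abs, sq_abs, ← Rat.mul_den_eq_num, h]; ring
  exact_mod_cast key

section SquareClasses

variable {n : ℕ}

def signUnit (ε : Bool) : ℚˣ := if ε then 1 else -1

@[simp] theorem signUnit_true : signUnit true = 1 := rfl

@[simp] theorem signUnit_false : signUnit false = -1 := rfl

theorem signUnit_beq (ε₁ ε₂ : Bool) : signUnit (ε₁ == ε₂) = signUnit ε₁ * signUnit ε₂ := by
  cases ε₁ <;> cases ε₂ <;> simp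

def sqfClass (n : ℕ) (ε : Bool) (g : ℕ) : ℚˣ ⧸ powSubgroup n :=
  mk (signUnit ε * natUnit g ^ (n / 2))

theorem sqfClass_two_mul (k : ℕ) (ε : Bool) (g : ℕ) :
    sqfClass (2 * k) ε g = mk (signUnit ε * natUnit g ^ k) := by
  rw [sqfClass, Nat.mul_div_cancel_left k two_pos]

theorem val_signUnit_mul_natUnit_pow (ε : Bool) {g : ℕ} (hg : g ≠ 0) (k : ℕ) :
    ((signUnit ε * natUnit g ^ k : ℚˣ) : ℚ) = signUnit ε * (g : ℚ) ^ k := by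
  rw [Units.val_mul, Units.val_pow_eq_pow_val, val_natUnit hg]

theorem sqfClass_true_one : sqfClass n true 1 = 1 := by
  simp [sqfClass, natUnit_one]

theorem exists_sqfClass_eq (hn : Even n) {c : ℚˣ ⧸ powSubgroup n} (hc : c ^ 2 = 1) :
    ∃ ε g, Squarefree g ∧ sqfClass n ε g = c := by
  obtain ⟨k, rfl⟩ := even_iff_two_dvd.mp hn
  induction c using QuotientGroup.induction_on with | H x => ?_
  obtain ⟨y, hy⟩ : x ^ 2 ∈ powSubgroup (2 * k) := by
    rwa [← QuotientGroup.eq_one_iff, QuotientGroup.mk_pow]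
  obtain ⟨g, t, hg, ht, hyg⟩ := Rat.exists_abs_eq_squarefree_mul_sq y.ne_zero
  have hx : (x : ℚ) ^ 2 = ((g : ℚ) ^ k * t ^ (2 * k)) ^ 2 := by
    calc (x : ℚ) ^ 2 = (y : ℚ) ^ (2 * k) := by rw [← Units.val_pow_eq_pow_val, ← hy]; rfl
      _ = |(y : ℚ)| ^ (2 * k) := (hn.pow_abs _).symm
      _ = ((g : ℚ) ^ k * t ^ (2 * k)) ^ 2 := by rw [hyg]; ring
  have hsign : ∃ ε : Bool, (x : ℚ) = signUnit ε * (g : ℚ) ^ k * t ^ (2 * k) := by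
    rcases sq_eq_sq_iff_eq_or_eq_neg.mp hx with h | h
    · exact ⟨true, by simp [h]⟩
    · exact ⟨false, by simp [h]⟩
  obtain ⟨ε, hε⟩ := hsign
  refine ⟨ε, g, hg, ?_⟩
  rw [sqfClass_two_mul]
  exact (mk_eq_mk_of_val_eq_mul_pow ht (by rw [hε, val_signUnit_mul_natUnit_pow ε hg.ne_zero])).symm

theorem sqfClass_inj (hn : Even n) (hn0 : n ≠ 0) {ε₁ ε₂ : Bool} {g₁ g₂ : ℕ}
    (h₁ : Squarefree g₁) (h₂ : Squarefree g₂) (h : sqfClass n ε₁ g₁ = sqfClass n ε₂ g₂) :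
    ε₁ = ε₂ ∧ g₁ = g₂ := by
  obtain ⟨k, rfl⟩ := even_iff_two_dvd.mp hn
  rw [sqfClass_two_mul, sqfClass_two_mul] at h
  obtain ⟨y, hy⟩ := QuotientGroup.eq.mp h
  have hval := congrArg Units.val (inv_mul_eq_iff_eq_mul.mp hy.symm)
  simp only [powMonoidHom_apply, Units.val_mul, Units.val_pow_eq_pow_val, val_natUnit h₁.ne_zero,
    val_natUnit h₂.ne_zero] at hval
  have hG₁ : 0 < (g₁ : ℚ) ^ k := by have := h₁.ne_zero; positivity
  have hG₂ : 0 < (g₂ : ℚ) ^ k := by have := h₂.ne_zero; positivity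
  have hY : 0 < (y : ℚ) ^ (2 * k) := hn.pow_pos y.ne_zero
  have hε : ε₁ = ε₂ := by
    cases ε₁ <;> cases ε₂ <;> simp only [signUnit_true, signUnit_false, Units.val_one,
      Units.val_neg] at hval <;> first | rfl | nlinarith
  subst hε
  have hpow : (g₂ : ℚ) ^ k = ((g₁ : ℚ) * (y : ℚ) ^ 2) ^ k := by
    rw [mul_pow, ← pow_mul]
    cases ε₁ <;> simp only [signUnit_true, signUnit_false, Units.val_one, Units.val_neg] at hval
      <;> linarith
  have hk : k ≠ 0 := by rintro rfl; exact hn0 rfl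
  have hbase := (pow_left_inj₀ (by positivity) (by positivity) hk).mp hpow
  exact ⟨rfl, h₁.eq_of_cast_eq_mul_sq h₂ hbase⟩

theorem sqfClass_mul (hn : Even n) (ε₁ ε₂ : Bool) {g₁ g₂ : ℕ} (hg₁ : g₁ ≠ 0) (hg₂ : g₂ ≠ 0) :
    ∃ g₃ t : ℕ, Squarefree g₃ ∧ g₁ * g₂ = t ^ 2 * g₃ ∧
      sqfClass n ε₁ g₁ * sqfClass n ε₂ g₂ = sqfClass n (ε₁ == ε₂) g₃ := by
  obtain ⟨k, rfl⟩ := even_iff_two_dvd.mp hn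
  obtain ⟨g₃, t, hg₃, ht, hprod, hsq⟩ := Nat.sq_mul_squarefree_of_pos (n := g₁ * g₂) (by positivity)
  refine ⟨g₃, t, hsq, hprod.symm, ?_⟩
  have hcast : (g₁ : ℚ) * g₂ = t ^ 2 * g₃ := by exact_mod_cast hprod.symm
  rw [sqfClass_two_mul, sqfClass_two_mul, sqfClass_two_mul, ← QuotientGroup.mk_mul]
  refine mk_eq_mk_of_val_eq_mul_pow (t := t) (by positivity) ?_
  rw [Units.val_mul, val_signUnit_mul_natUnit_pow ε₁ hg₁, val_signUnit_mul_natUnit_pow ε₂ hg₂,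
    val_signUnit_mul_natUnit_pow _ hg₃.ne_zero, signUnit_beq, Units.val_mul]
  linear_combination (signUnit ε₁ * signUnit ε₂ : ℚ) * congrArg (· ^ k) hcast

theorem sqfClass_true (g : ℕ) : sqfClass n true g = mk (natUnit g ^ (n / 2)) := by
  rw [sqfClass, signUnit_true, one_mul]

theorem sqfClass_false (g : ℕ) : sqfClass n false g = mk (-(natUnit g ^ (n / 2))) := by
  rw [sqfClass, signUnit_false, neg_one_mul]

theorem isPosClass_sqfClass (hn : Even n) (ε : Bool) {g : ℕ} (hg : g ≠ 0) :
    IsPosClass n (sqfClass n ε g) ↔ ε = true := by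
  rw [sqfClass, isPosClass_mk_iff hn, val_signUnit_mul_natUnit_pow ε hg]
  have : 0 < (g : ℚ) ^ (n / 2) := by positivity
  cases ε <;> simp [this]

-- The discriminant of `ℚ(√g)` when `g` is squarefree.
def quadFieldDisc (g : ℕ) : ℕ := if g % 4 = 1 then g else 4 * g

theorem deltaClass_sqfClass (hn : Even n) (hn0 : n ≠ 0) (ε : Bool) {g : ℕ} (hg : Squarefree g) :
    deltaClass n (sqfClass n ε g) = quadFieldDisc g := by
  have hinj {ε' : Bool} {g' : ℕ} (hg' : Squarefree g') (h : sqfClass n ε' g' = sqfClass n ε g) :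
      g' = g := (sqfClass_inj hn hn0 hg' hg h).2
  have hwit (g' : ℕ) : ((mk (natUnit g' ^ (n / 2)) : ℚˣ ⧸ powSubgroup n) = sqfClass n ε g ∨
      mk (-(natUnit g' ^ (n / 2))) = sqfClass n ε g) ↔ ∃ ε', sqfClass n ε' g' = sqfClass n ε g := by
    rw [Bool.exists_bool, sqfClass_false, sqfClass_true, or_comm]
  by_cases h1 : sqfClass n ε g = 1
  · obtain rfl := hinj squarefree_one (sqfClass_true_one.trans h1.symm)
    rw [deltaClass, if_pos h1]; rfl
  rw [deltaClass, if_neg h1]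
  split
  next hex =>
    obtain ⟨hsf, -, hor⟩ := hex.choose_spec
    obtain ⟨ε', h⟩ := (hwit _).mp hor
    rw [hinj hsf h, quadFieldDisc]
  next hex =>
    obtain rfl : g = 1 := by
      by_contra hne
      exact hex ⟨g, hg, by have := hg.ne_zero; omega, (hwit g).mpr ⟨ε, rfl⟩⟩
    rfl

end SquareClasses

theorem Squarefree.mod_four_ne_zero {g : ℕ} (hg : Squarefree g) : g % 4 ≠ 0 := fun h =>
  absurd (Nat.isUnit_iff.mp (hg 2 (Nat.dvd_of_mod_eq_zero h))) (by decide)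

theorem padicValNat_two_quadFieldDisc {g : ℕ} (hg : Squarefree g) :
    padicValNat 2 (quadFieldDisc g) = if g % 4 = 1 then 0 else if g % 4 = 3 then 2 else 3 := by
  have h4 := hg.mod_four_ne_zero
  unfold quadFieldDisc
  split_ifs with h1 h3
  · exact padicValNat.eq_zero_of_not_dvd (by omega)
  · rw [show 4 * g = 2 ^ 2 * g by ring, padicValNat.mul (by positivity) hg.ne_zero,
      padicValNat.prime_pow, padicValNat.eq_zero_of_not_dvd (by omega)]
  · obtain ⟨a, rfl⟩ : 2 ∣ g := by omega
    rw [show 4 * (2 * a) = 2 ^ 3 * a by ring, padicValNat.mul (by positivity) (by omega),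
      padicValNat.prime_pow, padicValNat.eq_zero_of_not_dvd (by omega)]

theorem mod_two_eq_one_iff_of_mul_eq_sq_mul {g₁ g₂ g₃ t : ℕ} (h₁ : Squarefree g₁)
    (h₂ : Squarefree g₂) (h₃ : Squarefree g₃) (h : g₁ * g₂ = t ^ 2 * g₃) :
    g₃ % 2 = 1 ↔ g₁ % 2 = g₂ % 2 := by
  have ht : t ≠ 0 := by rintro rfl; simp [h₁.ne_zero, h₂.ne_zero] at h
  have hv := congrArg (fun x => x.factorization 2) h
  simp only [Nat.factorization_mul h₁.ne_zero h₂.ne_zero,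
    Nat.factorization_mul (pow_ne_zero 2 ht) h₃.ne_zero, Nat.factorization_pow,
    Finsupp.add_apply, Finsupp.smul_apply, smul_eq_mul] at hv
  have hodd {g : ℕ} (hg : Squarefree g) : g.factorization 2 = 0 ↔ ¬ 2 ∣ g := by
    simp [Nat.factorization_eq_zero_iff, Nat.prime_two, hg.ne_zero]
  have := hodd h₁; have := hodd h₂; have := hodd h₃
  have := h₁.natFactorization_le_one 2
  have := h₂.natFactorization_le_one 2
  have := h₃.natFactorization_le_one 2
  omega

theorem mod_four_eq_one_iff_of_mul_eq_sq_mul {g₁ g₂ g₃ t : ℕ} (h : g₁ * g₂ = t ^ 2 * g₃)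
    (h₁ : g₁ % 2 = 1) (h₂ : g₂ % 2 = 1) : g₃ % 4 = 1 ↔ g₁ % 4 = g₂ % 4 := by
  have hodd : g₁ * g₂ % 2 = 1 := by rw [Nat.mul_mod, h₁, h₂]
  have ht : t % 2 = 1 := by
    rw [h, Nat.mul_mod, Nat.pow_mod] at hodd
    rcases Nat.mod_two_eq_zero_or_one t with h0 | h0 <;> simp_all
  have ht4 : t ^ 2 % 4 = 1 := by
    rw [Nat.pow_mod]; rcases (by omega : t % 4 = 1 ∨ t % 4 = 3) with e | e <;> simp [e]
  have hmod : g₁ * g₂ % 4 = g₃ % 4 := by rw [h, Nat.mul_mod, ht4, one_mul, Nat.mod_mod]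
  rw [Nat.mul_mod] at hmod
  rcases (by omega : g₁ % 4 = 1 ∨ g₁ % 4 = 3) with e₁ | e₁ <;>
    rcases (by omega : g₂ % 4 = 1 ∨ g₂ % 4 = 3) with e₂ | e₂ <;> simp [e₁, e₂] at hmod <;> omega

def TildeCond (α : ℕ) (ε : Bool) (g : ℕ) : Prop :=
  if ε then padicValNat 2 (quadFieldDisc g) ≤ α else padicValNat 2 (quadFieldDisc g) = α + 1

theorem TildeCond.mul {α : ℕ} {ε₁ ε₂ : Bool} {g₁ g₂ g₃ t : ℕ} (h₁ : Squarefree g₁)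
    (h₂ : Squarefree g₂) (h₃ : Squarefree g₃) (h : g₁ * g₂ = t ^ 2 * g₃)
    (c₁ : TildeCond α ε₁ g₁) (c₂ : TildeCond α ε₂ g₂) : TildeCond α (ε₁ == ε₂) g₃ := by
  have hpar := mod_two_eq_one_iff_of_mul_eq_sq_mul h₁ h₂ h₃ h
  have hmod := mod_four_eq_one_iff_of_mul_eq_sq_mul h
  have := h₁.mod_four_ne_zero; have := h₂.mod_four_ne_zero; have := h₃.mod_four_ne_zero
  simp only [TildeCond, padicValNat_two_quadFieldDisc h₁, padicValNat_two_quadFieldDisc h₂,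
    padicValNat_two_quadFieldDisc h₃] at c₁ c₂ ⊢
  cases ε₁ <;> cases ε₂ <;> simp only [Bool.false_beq, Bool.true_beq, if_true, if_false,
    Bool.false_eq_true, Bool.not_false, Bool.not_true] at c₁ c₂ ⊢ <;> split_ifs at c₁ c₂ ⊢ <;> omega

theorem sqfClass_mem_tildeGamma_iff {Γ : Subgroup ℚˣ} {m : ℕ} (hm : padicValNat 2 m ≠ 0)
    {ε : Bool} {g : ℕ} (hg : Squarefree g) :
    sqfClass (2 ^ padicValNat 2 m) ε g ∈ tildeGamma Γ m ↔
      sqfClass (2 ^ padicValNat 2 m) ε g ∈ GammaMod Γ (2 ^ padicValNat 2 m) ∧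
      sqfClass (2 ^ padicValNat 2 m) ε g ^ 2 = 1 ∧ TildeCond (padicValNat 2 m) ε g := by
  have hn : Even (2 ^ padicValNat 2 m) := (Nat.even_pow' hm).mpr even_two
  simp only [tildeGamma, Set.mem_ofPred_eq, isPosClass_sqfClass hn ε hg.ne_zero,
    deltaClass_sqfClass hn (by positivity) ε hg, TildeCond]

theorem one_mem_tildeGamma (Γ : Subgroup ℚˣ) (m : ℕ) : 1 ∈ tildeGamma Γ m := by
  refine ⟨one_mem _, one_pow 2, ?_⟩
  rw [if_pos ⟨1, rfl, one_pos⟩, deltaClass, if_pos rfl, padicValNat_one_right]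
  exact Nat.zero_le _

theorem mul_mem_tildeGamma {Γ : Subgroup ℚˣ} {m : ℕ}
    {a b : ℚˣ ⧸ powSubgroup (2 ^ padicValNat 2 m)} (ha : a ∈ tildeGamma Γ m)
    (hb : b ∈ tildeGamma Γ m) : a * b ∈ tildeGamma Γ m := by
  rcases eq_or_ne (padicValNat 2 m) 0 with hm | hm
  · have : Subsingleton (ℚˣ ⧸ powSubgroup (2 ^ padicValNat 2 m)) := by
      rw [hm, pow_zero]; exact subsingleton_quotient_powSubgroup_one
    rwa [Subsingleton.elim (a * b) a]
  have hn : Even (2 ^ padicValNat 2 m) := (Nat.even_pow' hm).mpr even_two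
  obtain ⟨ε₁, g₁, hg₁, rfl⟩ := exists_sqfClass_eq hn ha.2.1
  obtain ⟨ε₂, g₂, hg₂, rfl⟩ := exists_sqfClass_eq hn hb.2.1
  obtain ⟨g₃, t, hg₃, hprod, hmul⟩ := sqfClass_mul hn ε₁ ε₂ hg₁.ne_zero hg₂.ne_zero
  rw [sqfClass_mem_tildeGamma_iff hm hg₁] at ha
  rw [sqfClass_mem_tildeGamma_iff hm hg₂] at hb
  rw [hmul, sqfClass_mem_tildeGamma_iff hm hg₃, ← hmul, mul_pow, ha.2.1, hb.2.1, one_mul]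
  exact ⟨mul_mem ha.1 hb.1, rfl, ha.2.2.mul hg₁ hg₂ hg₃ hprod hb.2.2⟩

def tildeGammaSubgroup (Γ : Subgroup ℚˣ) (m : ℕ) :
    Subgroup (ℚˣ ⧸ powSubgroup (2 ^ padicValNat 2 m)) where
  carrier := tildeGamma Γ m
  one_mem' := one_mem_tildeGamma Γ m
  mul_mem' := mul_mem_tildeGamma
  inv_mem' {c} hc := by rwa [inv_eq_of_mul_eq_one_right (by rw [← sq, hc.2.1] : c * c = 1)]

theorem exists_card_eq_two_pow_of_forall_sq_eq_one {G : Type*} [Group G] [Finite G]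
    (h : ∀ g : G, g ^ 2 = 1) : ∃ k, Nat.card G = 2 ^ k :=
  IsPGroup.iff_card.mp fun g => ⟨1, by rw [pow_one, h]⟩

theorem tildeGamma_isSubgroup_general (Γ : Subgroup ℚˣ) (hFG : Γ.FG) (m : ℕ) :
    ∃ H : Subgroup (ℚˣ ⧸ powSubgroup (2 ^ padicValNat 2 m)),
      (H : Set (ℚˣ ⧸ powSubgroup (2 ^ padicValNat 2 m))) = tildeGamma Γ m ∧
      (∀ c ∈ H, c ∈ GammaMod Γ (2 ^ padicValNat 2 m) ∧ c ^ 2 = 1) ∧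
      ∃ k : ℕ, Nat.card (tildeGamma Γ m) = 2 ^ k := by
  refine ⟨tildeGammaSubgroup Γ m, rfl, fun c hc => ⟨hc.1, hc.2.1⟩, ?_⟩
  have : Finite (GammaMod Γ (2 ^ padicValNat 2 m)) := GammaMod.finite hFG (by positivity)
  have : Finite (tildeGammaSubgroup Γ m) :=
    Set.Finite.subset (Set.toFinite (GammaMod Γ (2 ^ padicValNat 2 m) : Set _)) fun _ hc => hc.1
  exact exists_card_eq_two_pow_of_forall_sq_eq_one (G := tildeGammaSubgroup Γ m)
    fun c => Subtype.ext c.2.2.1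

/-- **`tildeΓ(m)` is a subgroup of the 2-torsion subgroup `Γ(m₂)[2]`**, and its order
is a power of `2`. -/
theorem tildeGamma_isSubgroup (Γ : Subgroup ℚˣ) (hFG : Γ.FG) (m : ℕ) (hm : 1 ≤ m) :
    ∃ H : Subgroup (ℚˣ ⧸ powSubgroup (2 ^ padicValNat 2 m)),
      (H : Set (ℚˣ ⧸ powSubgroup (2 ^ padicValNat 2 m))) = tildeGamma Γ m ∧
      (∀ c ∈ H, c ∈ GammaMod Γ (2 ^ padicValNat 2 m) ∧ c ^ 2 = 1) ∧
      ∃ k : ℕ, Nat.card (tildeGamma Γ m) = 2 ^ k :=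
  tildeGamma_isSubgroup_general Γ hFG m
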